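/- arXiv:2209.07240 — 6 statements merged into one kernel-verified Lean document; each statement's English description precedes it below -/
import Mathlib

section
/- Let k be a real number and x₀ > exp(−k). If x : [0,∞) → ℝ is differentiable, satisfies x(t) > 0 for all t ≥ 0, x(0) = x₀, and x'(t) = x(t)·log x(t) + k·x(t) for all t ≥ 0, then x(t) → +∞ as t → ∞. In particular, for every choice of gain k ∈ ℝ, the equilibrium 0 of the deterministic system dx/dt = x·log|x| + kx is not globally attracting: there exist initial conditions whose solutions diverge to infinity. -/
/-!
Along a positive solution, `y = log x + k` solves the linear equation `y' = y`, so
`log x t + k = (log x₀ + k) eᵗ`. The hypothesis `x₀ > exp (-k)` says exactly that the constant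
`log x₀ + k` is positive, hence `log x t`, and with it `x t`, tends to `+∞`.
-/

open Real Set Filter

theorem eq_mul_exp_of_hasDerivWithinAt_const_mul {y : ℝ → ℝ} {a c : ℝ}
    (hy : ∀ t ∈ Ici a, HasDerivWithinAt y (c * y t) (Ici a) t) :
    ∀ t ∈ Ici a, y t = y a * exp (c * (t - a)) := by
  set z : ℝ → ℝ := fun s => y s * exp (-(c * (s - a)))
  have hz : ∀ t ∈ Ici a, HasDerivWithinAt z 0 (Ici a) t := by
    intro t ht
    have hexp : HasDerivWithinAt (fun s => exp (-(c * (s - a))))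
        (exp (-(c * (t - a))) * -(c * 1)) (Ici a) t :=
      (((hasDerivWithinAt_id t _).sub_const a).const_mul c).neg.exp
    exact ((hy t ht).mul hexp).congr_deriv (by ring)
  intro t ht
  have hconst : z t = z a :=
    constant_of_has_deriv_right_zero
      (fun s hs => (hz s (Icc_subset_Ici_self hs)).continuousWithinAt.mono Icc_subset_Ici_self)
      (fun s hs => (hz s hs.1).mono (Ici_subset_Ici.mpr hs.1)) t (right_mem_Icc.mpr ht)
  simp only [z, sub_self, mul_zero, exp_zero, exp_neg, inv_one, mul_one] at hconst
  rwa [mul_inv_eq_iff_eq_mul₀ (exp_pos _).ne'] at hconst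

theorem hasDerivWithinAt_log_add_const_of_mul_log_add_mul {x : ℝ → ℝ} {s : Set ℝ} {t k : ℝ}
    (h : HasDerivWithinAt x (x t * log (x t) + k * x t) s t) (hx : x t ≠ 0) :
    HasDerivWithinAt (fun u => log (x u) + k) (log (x t) + k) s t :=
  ((h.log hx).add_const k).congr_deriv (by field_simp)

/-- The deterministic system `x' = x log x + k x` cannot be globally stabilized by
any linear controller `u(x) = kx`: any positive solution starting at `x₀ > exp (−k)`
diverges to `+∞`. -/
theorem stmt_1 (k x₀ : ℝ) (hx₀ : Real.exp (-k) < x₀) (x : ℝ → ℝ)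
    (hpos : ∀ t ∈ Set.Ici (0 : ℝ), 0 < x t)
    (hderiv : ∀ t ∈ Set.Ici (0 : ℝ),
      HasDerivWithinAt x (x t * Real.log (x t) + k * x t) (Set.Ici (0 : ℝ)) t)
    (hinit : x 0 = x₀) :
    Filter.Tendsto x Filter.atTop Filter.atTop := by
  have hsol : ∀ t ∈ Ici (0 : ℝ), log (x t) + k = (log x₀ + k) * exp t := by
    intro t ht
    have hy := fun s hs => (hasDerivWithinAt_log_add_const_of_mul_log_add_mul (hderiv s hs)
      (hpos s hs).ne').congr_deriv (one_mul _).symm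
    simpa only [hinit, one_mul, sub_zero] using eq_mul_exp_of_hasDerivWithinAt_const_mul hy t ht
  have hc : 0 < log x₀ + k := by
    linarith [(lt_log_iff_exp_lt ((exp_pos _).trans hx₀)).mpr hx₀]
  have hlog : Tendsto (fun t => log (x t)) atTop atTop := by
    refine ((tendsto_exp_atTop.const_mul_atTop hc).atTop_add
      (tendsto_const_nhds (x := -k))).congr' ?_
    filter_upwards [eventually_ge_atTop 0] with t ht
    linarith [hsol t ht]
  refine (tendsto_exp_comp_atTop.mpr hlog).congr' ?_
  filter_upwards [eventually_ge_atTop 0] with t ht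
  exact exp_log (hpos t ht)
end

section
/- Let d > 0 and define σ : ℝ → ℝ by σ(x) = 0 for x ≤ 0, σ(x) = (2d·x³ − x⁴)/(2d³) for 0 < x ≤ d, and σ(x) = x − d/2 for x > d. Then σ is convex on ℝ, monotone non-decreasing, 1-Lipschitz, and satisfies 0 ≤ max(x, 0) − σ(x) ≤ d/2 for all x ∈ ℝ; i.e., σ uniformly approximates the ReLU function max(x,0) with error at most d/2. -/
/-!
The derivative of `σ` is `0` on `(-∞, 0]`, the smoothstep cubic `x²(3d - 2x)/d³` on `[0, d]`
and `1` on `[d, ∞)`; the pieces match at `0` and `d`, so `σ` is differentiable with a monotone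
derivative taking values in `[0, 1]`. This gives convexity, monotonicity and the Lipschitz bound.
Since `σ' ≤ 1`, the error `x - σ x` is monotone on `[0, ∞)`, so it increases from `0` at `x = 0`
to `d/2` at `x = d`, where it stays.
-/

open Set Filter Topology

theorem hasDerivAt_of_nhdsLE_of_nhdsGE {F : Type*} [NormedAddCommGroup F] [NormedSpace ℝ F]
    {f u v : ℝ → F} {f' : F} {a : ℝ} (hu : HasDerivAt u f' a) (hv : HasDerivAt v f' a)
    (hfu : f =ᶠ[𝓝[≤] a] u) (hfv : f =ᶠ[𝓝[≥] a] v) : HasDerivAt f f' a := by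
  have hle := hu.hasDerivWithinAt.congr_of_eventuallyEq_of_mem hfu self_mem_Iic
  have hge := hv.hasDerivWithinAt.congr_of_eventuallyEq_of_mem hfv self_mem_Ici
  simpa only [Iic_union_Ici, hasDerivWithinAt_univ] using hle.union hge

noncomputable section

def smoothReLU (d x : ℝ) : ℝ :=
  if x ≤ 0 then 0 else if x ≤ d then (2 * d * x ^ 3 - x ^ 4) / (2 * d ^ 3) else x - d / 2

def smoothReLUDeriv (d x : ℝ) : ℝ :=
  if x ≤ 0 then 0 else if x ≤ d then x ^ 2 * (3 * d - 2 * x) / d ^ 3 else 1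

end

theorem hasDerivAt_smoothReLU_cubic (d x : ℝ) :
    HasDerivAt (fun t : ℝ => (2 * d * t ^ 3 - t ^ 4) / (2 * d ^ 3))
      (x ^ 2 * (3 * d - 2 * x) / d ^ 3) x := by
  refine ((((hasDerivAt_pow 3 x).const_mul (2 * d)).sub (hasDerivAt_pow 4 x)).div_const
    (2 * d ^ 3)).congr_deriv ?_
  push_cast
  ring

section

variable {d x : ℝ}

theorem smoothReLU_of_nonpos (hx : x ≤ 0) : smoothReLU d x = 0 := by
  simp [smoothReLU, hx]

theorem smoothReLU_of_mem_Icc (hx : x ∈ Icc 0 d) :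
    smoothReLU d x = (2 * d * x ^ 3 - x ^ 4) / (2 * d ^ 3) := by
  rcases hx.1.eq_or_lt with rfl | hx0
  · simp [smoothReLU]
  · simp [smoothReLU, hx0.not_ge, hx.2]

theorem smoothReLU_of_le (hd : 0 < d) (hx : d ≤ x) : smoothReLU d x = x - d / 2 := by
  rcases hx.eq_or_lt with rfl | hdx
  · rw [smoothReLU_of_mem_Icc ⟨hd.le, le_rfl⟩]
    field_simp
  · simp [smoothReLU, (hd.trans hdx).not_ge, hdx.not_ge]

theorem smoothReLUDeriv_of_nonpos (hx : x ≤ 0) : smoothReLUDeriv d x = 0 := by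
  simp [smoothReLUDeriv, hx]

theorem smoothReLUDeriv_of_mem_Icc (hx : x ∈ Icc 0 d) :
    smoothReLUDeriv d x = x ^ 2 * (3 * d - 2 * x) / d ^ 3 := by
  rcases hx.1.eq_or_lt with rfl | hx0
  · simp [smoothReLUDeriv]
  · simp [smoothReLUDeriv, hx0.not_ge, hx.2]

theorem smoothReLUDeriv_of_le (hd : 0 < d) (hx : d ≤ x) : smoothReLUDeriv d x = 1 := by
  rcases hx.eq_or_lt with rfl | hdx
  · rw [smoothReLUDeriv_of_mem_Icc ⟨hd.le, le_rfl⟩]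
    field_simp
    ring
  · simp [smoothReLUDeriv, (hd.trans hdx).not_ge, hdx.not_ge]

end

section

variable {d : ℝ}

theorem hasDerivAt_smoothReLU (hd : 0 < d) (x : ℝ) :
    HasDerivAt (smoothReLU d) (smoothReLUDeriv d x) x := by
  have hcubic {s : Set ℝ} (hs : s ⊆ Icc 0 d) :
      ∀ t ∈ s, smoothReLU d t = (2 * d * t ^ 3 - t ^ 4) / (2 * d ^ 3) :=
    fun t ht => smoothReLU_of_mem_Icc (hs ht)
  rcases lt_trichotomy x 0 with hx | rfl | hx
  · rw [smoothReLUDeriv_of_nonpos hx.le]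
    exact (hasDerivAt_const x 0).congr_of_eventuallyEq
      (eventually_of_mem (Iic_mem_nhds hx) fun t ht => smoothReLU_of_nonpos ht)
  · rw [smoothReLUDeriv_of_nonpos le_rfl]
    exact hasDerivAt_of_nhdsLE_of_nhdsGE (hasDerivAt_const 0 0)
      (by simpa using hasDerivAt_smoothReLU_cubic d 0)
      (eventually_nhdsWithin_of_forall fun t ht => smoothReLU_of_nonpos ht)
      (eventually_of_mem (Ico_mem_nhdsGE hd) (hcubic Ico_subset_Icc_self))
  rcases lt_trichotomy x d with hxd | rfl | hxd
  · rw [smoothReLUDeriv_of_mem_Icc ⟨hx.le, hxd.le⟩]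
    exact (hasDerivAt_smoothReLU_cubic d x).congr_of_eventuallyEq
      (eventually_of_mem (Ioo_mem_nhds hx hxd) (hcubic Ioo_subset_Icc_self))
  · rw [smoothReLUDeriv_of_le hd le_rfl]
    refine hasDerivAt_of_nhdsLE_of_nhdsGE (v := fun t => t - x / 2) ?_
      ((hasDerivAt_id x).sub_const (x / 2))
      (eventually_of_mem (Ioc_mem_nhdsLE hd) (hcubic Ioc_subset_Icc_self))
      (eventually_nhdsWithin_of_forall fun t ht => smoothReLU_of_le hd ht)
    simpa [← smoothReLUDeriv_of_mem_Icc ⟨hd.le, le_rfl⟩, smoothReLUDeriv_of_le hd le_rfl]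
      using hasDerivAt_smoothReLU_cubic x x
  · rw [smoothReLUDeriv_of_le hd hxd.le]
    exact ((hasDerivAt_id x).sub_const (d / 2)).congr_of_eventuallyEq
      (eventually_of_mem (Ioi_mem_nhds hxd) fun t ht => smoothReLU_of_le hd (le_of_lt ht))

theorem smoothReLUDeriv_nonneg (hd : 0 < d) (x : ℝ) : 0 ≤ smoothReLUDeriv d x := by
  rcases le_or_gt x 0 with hx | hx
  · rw [smoothReLUDeriv_of_nonpos hx]
  rcases le_or_gt d x with hdx | hxd
  · rw [smoothReLUDeriv_of_le hd hdx]
    exact zero_le_one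
  rw [smoothReLUDeriv_of_mem_Icc ⟨hx.le, hxd.le⟩]
  have : 0 ≤ 3 * d - 2 * x := by linarith
  positivity

theorem smoothReLUDeriv_le_one (hd : 0 < d) (x : ℝ) : smoothReLUDeriv d x ≤ 1 := by
  rcases le_or_gt x 0 with hx | hx
  · rw [smoothReLUDeriv_of_nonpos hx]
    exact zero_le_one
  rcases le_or_gt d x with hdx | hxd
  · rw [smoothReLUDeriv_of_le hd hdx]
  rw [smoothReLUDeriv_of_mem_Icc ⟨hx.le, hxd.le⟩, div_le_one (by positivity)]
  -- `d³ - x²(3d - 2x) = (d - x)²(d + 2x)`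
  nlinarith [mul_nonneg (sq_nonneg (d - x)) (by linarith : 0 ≤ d + 2 * x)]

theorem monotone_smoothReLUDeriv (hd : 0 < d) : Monotone (smoothReLUDeriv d) := by
  intro x y hxy
  rcases le_or_gt x 0 with hx | hx
  · rw [smoothReLUDeriv_of_nonpos hx]
    exact smoothReLUDeriv_nonneg hd y
  rcases le_or_gt d y with hdy | hyd
  · rw [smoothReLUDeriv_of_le hd hdy]
    exact smoothReLUDeriv_le_one hd x
  rw [smoothReLUDeriv_of_mem_Icc ⟨hx.le, hxy.trans hyd.le⟩,
    smoothReLUDeriv_of_mem_Icc ⟨hx.le.trans hxy, hyd.le⟩]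
  gcongr ?_ / _
  -- the difference is `(y - x)(3d(x + y) - 2(x² + xy + y²))`, and `x, y ≤ d`
  nlinarith [mul_nonneg (sub_nonneg.2 hxy) (mul_nonneg hx.le (sub_nonneg.2 (hxy.trans hyd.le))),
    mul_nonneg (sub_nonneg.2 hxy) (mul_nonneg (hx.le.trans hxy) (sub_nonneg.2 hyd.le)),
    mul_nonneg (sub_nonneg.2 hxy) (sq_nonneg (x - y))]

theorem deriv_smoothReLU (hd : 0 < d) : deriv (smoothReLU d) = smoothReLUDeriv d :=
  funext fun x => (hasDerivAt_smoothReLU hd x).deriv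

theorem differentiable_smoothReLU (hd : 0 < d) : Differentiable ℝ (smoothReLU d) :=
  fun x => (hasDerivAt_smoothReLU hd x).differentiableAt

theorem convexOn_smoothReLU (hd : 0 < d) : ConvexOn ℝ univ (smoothReLU d) :=
  Monotone.convexOn_univ_of_deriv (differentiable_smoothReLU hd)
    (deriv_smoothReLU hd ▸ monotone_smoothReLUDeriv hd)

theorem monotone_smoothReLU (hd : 0 < d) : Monotone (smoothReLU d) :=
  monotone_of_hasDerivAt_nonneg (hasDerivAt_smoothReLU hd) (smoothReLUDeriv_nonneg hd)

theorem lipschitzWith_one_smoothReLU (hd : 0 < d) : LipschitzWith 1 (smoothReLU d) := by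
  refine lipschitzWith_of_nnnorm_deriv_le (differentiable_smoothReLU hd) fun x => ?_
  rw [deriv_smoothReLU hd, ← NNReal.coe_le_coe, coe_nnnorm, Real.norm_eq_abs, NNReal.coe_one]
  exact abs_le.2 ⟨by linarith [smoothReLUDeriv_nonneg hd x], smoothReLUDeriv_le_one hd x⟩

theorem monotone_sub_smoothReLU (hd : 0 < d) : Monotone fun x => x - smoothReLU d x :=
  monotone_of_hasDerivAt_nonneg (fun x => (hasDerivAt_id x).sub (hasDerivAt_smoothReLU hd x))
    fun x => sub_nonneg.2 (smoothReLUDeriv_le_one hd x)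

theorem max_sub_smoothReLU_mem_Icc (hd : 0 < d) (x : ℝ) :
    max x 0 - smoothReLU d x ∈ Icc 0 (d / 2) := by
  rcases le_total x 0 with hx | hx
  · rw [max_eq_right hx, smoothReLU_of_nonpos hx, sub_zero]
    exact ⟨le_rfl, by positivity⟩
  have h0 : 0 - smoothReLU d 0 = 0 := by simp [smoothReLU_of_nonpos le_rfl]
  have hmax : max x d - smoothReLU d (max x d) = d / 2 := by
    rw [smoothReLU_of_le hd (le_max_right x d)]
    ring
  rw [max_eq_left hx]
  exact ⟨h0 ▸ monotone_sub_smoothReLU hd hx, hmax ▸ monotone_sub_smoothReLU hd (le_max_left x d)⟩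

end

/-- The smoothed ReLU activation `σ` (Eq. (7) of the paper) is convex, monotone
non-decreasing, 1-Lipschitz, and uniformly approximates `ReLU(x) = max x 0`
with error at most `d/2`. -/
theorem stmt_4 (d : ℝ) (hd : 0 < d) (σ : ℝ → ℝ)
    (h0 : ∀ x : ℝ, x ≤ 0 → σ x = 0)
    (h1 : ∀ x : ℝ, 0 < x → x ≤ d → σ x = (2 * d * x ^ 3 - x ^ 4) / (2 * d ^ 3))
    (h2 : ∀ x : ℝ, d < x → σ x = x - d / 2) :
    ConvexOn ℝ Set.univ σ ∧ Monotone σ ∧ LipschitzWith 1 σ ∧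
      ∀ x : ℝ, 0 ≤ max x 0 - σ x ∧ max x 0 - σ x ≤ d / 2 := by
  obtain rfl : σ = smoothReLU d := by
    funext x
    unfold smoothReLU
    split_ifs with hx hxd
    exacts [h0 x hx, h1 x (not_le.1 hx) hxd, h2 x (not_le.1 hxd)]
  exact ⟨convexOn_smoothReLU hd, monotone_smoothReLU hd, lipschitzWith_one_smoothReLU hd,
    max_sub_smoothReLU_mem_Icc hd⟩
end

section
/- Consider the recursively defined maps z₁ = σ₀(W₀x + b₀) and z_{i+1} = σᵢ(Uᵢzᵢ + Wᵢx + bᵢ) for i = 1, …, k−1, where x ∈ ℝᵈ, each Wᵢ is a real matrix and bᵢ a real vector of compatible size, each Uᵢ is a matrix with nonnegative entries, and each σᵢ : ℝ → ℝ is convex and monotone non-decreasing and is applied componentwise. Then every scalar component of the output z_k is a convex function of the input x ∈ ℝᵈ. -/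
/-! By induction on the layer, each component of `zᵢ` is convex in `x`: the pre-activation
`Uᵢ zᵢ + Wᵢ x + bᵢ` is a combination of convex functions with the nonnegative weights of `Uᵢ`
plus an affine function, and a convex non-decreasing `σᵢ` of a convex function is convex. -/

open Set Matrix

section

variable {𝕜 E β : Type*} [AddCommMonoid E] [AddCommMonoid β] [PartialOrder β] {s : Set E}

theorem ConvexOn.sum [Semiring 𝕜] [PartialOrder 𝕜] [SMul 𝕜 E] [Module 𝕜 β]
    [IsOrderedAddMonoid β] {ι : Type*}
    (hs : Convex 𝕜 s) (t : Finset ι) {f : ι → E → β} (hf : ∀ i ∈ t, ConvexOn 𝕜 s (f i)) :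
    ConvexOn 𝕜 s (∑ i ∈ t, f i) :=
  Finset.sum_induction f (ConvexOn 𝕜 s) (fun _ _ => ConvexOn.add) (convexOn_const 0 hs) hf

theorem ConvexOn.monotone_comp [Semiring 𝕜] [PartialOrder 𝕜] [SMul 𝕜 E] [SMul 𝕜 β]
    {γ : Type*} [AddCommMonoid γ] [PartialOrder γ] [SMul 𝕜 γ] {g : β → γ} {f : E → β}
    (hg : ConvexOn 𝕜 univ g) (hg' : Monotone g) (hf : ConvexOn 𝕜 s f) :
    ConvexOn 𝕜 s (g ∘ f) :=
  ⟨hf.1, fun _ hx _ hy _ _ ha hb hab =>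
    (hg' (hf.2 hx hy ha hb hab)).trans (hg.2 trivial trivial ha hb hab)⟩

end

section

variable {𝕜 E m n : Type*} [CommSemiring 𝕜] [PartialOrder 𝕜] [IsOrderedRing 𝕜] [Fintype n]

theorem ConvexOn.mulVec_apply_of_nonneg [AddCommMonoid E] [SMul 𝕜 E] {s : Set E}
    (hs : Convex 𝕜 s) {U : Matrix m n 𝕜} {j : m} (hU : ∀ c, 0 ≤ U j c) {f : E → n → 𝕜}
    (hf : ∀ c, ConvexOn 𝕜 s fun x => f x c) : ConvexOn 𝕜 s fun x => (U *ᵥ f x) j := by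
  have hrow : (fun x => (U *ᵥ f x) j) = ∑ c, fun x => U j c • f x c := by
    ext x
    simp only [mulVec, dotProduct, Finset.sum_apply, smul_eq_mul]
  rw [hrow]
  exact ConvexOn.sum hs Finset.univ fun c _ => (hf c).smul (hU c)

theorem convexOn_mulVec_apply_add_const (W : Matrix m n 𝕜) (j : m) (c : 𝕜) :
    ConvexOn 𝕜 univ fun x => (W *ᵥ x) j + c :=
  ((LinearMap.proj j ∘ₗ W.mulVecLin).convexOn convex_univ).add_const c

end

/-- Input convex neural network (ICNN, Eq. (6) of the paper): with
`z₁ = σ₀(W₀ x + b₀)` and `z_{i+1} = σᵢ(Uᵢ zᵢ + Wᵢ x + bᵢ)` where the `Uᵢ` have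
nonnegative entries and the activations `σᵢ` are convex and monotone
non-decreasing (applied componentwise), every scalar component of the output
`z_k` is a convex function of the input `x ∈ ℝᵈ`. -/
theorem stmt_5 (d k : ℕ) (dims : Fin (k + 1) → ℕ)
    (W : ∀ i : Fin (k + 1), Matrix (Fin (dims i)) (Fin d) ℝ)
    (b : ∀ i : Fin (k + 1), Fin (dims i) → ℝ)
    (U : ∀ i : Fin k, Matrix (Fin (dims i.succ)) (Fin (dims i.castSucc)) ℝ)
    (hU : ∀ (i : Fin k) (r : Fin (dims i.succ)) (c : Fin (dims i.castSucc)), 0 ≤ U i r c)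
    (σ : Fin (k + 1) → ℝ → ℝ)
    (hσconv : ∀ i : Fin (k + 1), ConvexOn ℝ Set.univ (σ i))
    (hσmono : ∀ i : Fin (k + 1), Monotone (σ i))
    (z : ∀ i : Fin (k + 1), (Fin d → ℝ) → Fin (dims i) → ℝ)
    (hz0 : ∀ (x : Fin d → ℝ) (j : Fin (dims 0)),
      z 0 x j = σ 0 ((W 0).mulVec x j + b 0 j))
    (hzsucc : ∀ (i : Fin k) (x : Fin d → ℝ) (j : Fin (dims i.succ)),
      z i.succ x j =
        σ i.succ ((U i).mulVec (z i.castSucc x) j + (W i.succ).mulVec x j + b i.succ j)) :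
    ∀ j : Fin (dims (Fin.last k)), ConvexOn ℝ Set.univ (fun x : Fin d → ℝ => z (Fin.last k) x j) := by
  suffices h : ∀ i j, ConvexOn ℝ univ fun x => z i x j from h (Fin.last k)
  intro i
  induction i using Fin.induction with
  | zero =>
    intro j
    simp only [hz0]
    exact (hσconv 0).monotone_comp (hσmono 0) (convexOn_mulVec_apply_add_const _ _ _)
  | succ i ih =>
    intro j
    simp only [hzsucc, add_assoc]
    have hpre := (ConvexOn.mulVec_apply_of_nonneg convex_univ (hU i j) ih).add
      (convexOn_mulVec_apply_add_const (W i.succ) j (b i.succ j))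
    exact (hσconv i.succ).monotone_comp (hσmono i.succ) hpre
end

section
/- For every k > 0 there exist no constants c₂ ∈ ℝ and c₃ ≥ 0 with c₃ − 2c₂ > 0 such that for all (x₁, x₂) ∈ ℝ² with (x₁, x₂) ≠ (0,0): k(x₁² − 2x₁x₂ − 2x₂²) ≤ c₂·k(x₁² + x₂²) and (2k·x₁x₂)² ≥ c₃·k²(x₁² + x₂²)². -/
/-- For Example 1 of the paper with candidate Lyapunov function `V(x) = k‖x‖²`,
no constants `c₂ ∈ ℝ`, `c₃ ≥ 0` with `c₃ − 2c₂ > 0` can satisfy conditions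
(ii) `𝓛V ≤ c₂ V` and (iii) `|∇VᵀG|² ≥ c₃ V²` for all `x ≠ 0`. -/
theorem stmt_7 (k : ℝ) (hk : 0 < k) :
    ¬ ∃ (c₂ c₃ : ℝ), 0 ≤ c₃ ∧ 0 < c₃ - 2 * c₂ ∧
      ∀ x₁ x₂ : ℝ, (x₁, x₂) ≠ ((0 : ℝ), (0 : ℝ)) →
        (k * (x₁ ^ 2 - 2 * x₁ * x₂ - 2 * x₂ ^ 2) ≤ c₂ * (k * (x₁ ^ 2 + x₂ ^ 2))
          ∧ (2 * k * x₁ * x₂) ^ 2 ≥ c₃ * (k ^ 2 * (x₁ ^ 2 + x₂ ^ 2) ^ 2)) := by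
  rintro ⟨c₂, c₃, hc₃, hpos, h⟩
  obtain ⟨h1, h2⟩ := h 1 0 (by simp)
  have hk2 : (0:ℝ) < k ^ 2 := by positivity
  simp only [one_pow, mul_one, mul_zero, zero_pow, add_zero] at h1 h2
  nlinarith [sq_nonneg k]
end

section
/- There exist a symmetric positive definite matrix P ∈ ℝ^{2×2} and a constant c₂ < 0 such that for all x = (x₁, x₂) ∈ ℝ²: 2(Px)₁·x₂ + 2(Px)₂·(−2x₁ − x₂) + P₂₂·x₁² ≤ c₂·xᵀPx. -/
/-!
With `P = !![5/2, 1/2; 1/2, 1]` the generator is exactly `𝓛V(x) = -‖x‖²`, while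
`V(x) = xᵀPx ≤ tr P · ‖x‖² = 7/2 · ‖x‖²`; hence `𝓛V ≤ -2/7 · V`.
-/

open scoped Matrix

namespace Matrix

variable {α : Type*}

theorem dotProduct_mulVec_fin_two_of_symm [CommRing α] (a b c : α) (v : Fin 2 → α) :
    v ⬝ᵥ !![a, b; b, c] *ᵥ v = a * v 0 ^ 2 + 2 * b * v 0 * v 1 + c * v 1 ^ 2 := by
  simp only [vec2_dotProduct, mulVec, of_apply, cons_val_zero, cons_val_one]
  ring

theorem isSymm_of_fin_two (a b c : α) : (!![a, b; b, c]).IsSymm := by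
  ext i j
  fin_cases i <;> fin_cases j <;> rfl

theorem posDef_of_fin_two {a b c : ℝ} (ha : 0 < a) (hdet : b ^ 2 < a * c) :
    (!![a, b; b, c]).PosDef := by
  refine posDef_iff_dotProduct_mulVec.mpr ⟨isSymm_of_fin_two a b c, fun v hv ↦ ?_⟩
  rw [star_trivial, dotProduct_mulVec_fin_two_of_symm]
  by_cases h1 : v 1 = 0
  · have h0 : v 0 ≠ 0 := fun h0 ↦ hv (by ext i; fin_cases i <;> assumption)
    rw [h1]
    nlinarith [mul_self_pos.mpr h0]
  · -- completing the square: `a · vᵀPv = (a v₀ + b v₁)² + (ac - b²) v₁²`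
    have key : a * (a * v 0 ^ 2 + 2 * b * v 0 * v 1 + c * v 1 ^ 2)
        = (a * v 0 + b * v 1) ^ 2 + (a * c - b ^ 2) * v 1 ^ 2 := by ring
    have : 0 < a * (a * v 0 ^ 2 + 2 * b * v 0 * v 1 + c * v 1 ^ 2) := by
      rw [key]
      have := mul_pos (sub_pos.mpr hdet) (sq_pos_of_ne_zero h1)
      positivity
    exact pos_of_mul_pos_right this ha.le

end Matrix

open Matrix

-- The solution of `AᵀP + PA + P₂₂ E₁₁ = -1` for the drift `A = !![0, 1; -2, -1]`, the term
-- `P₂₂ E₁₁` being the Itô correction of the diffusion `x₁ dB`.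
noncomputable def lyapunovMatrix : Matrix (Fin 2) (Fin 2) ℝ := !![5/2, 1/2; 1/2, 1]

theorem generator_lyapunovMatrix (x₁ x₂ : ℝ) :
    2 * (lyapunovMatrix *ᵥ ![x₁, x₂]) 0 * x₂
        + 2 * (lyapunovMatrix *ᵥ ![x₁, x₂]) 1 * (-2 * x₁ - x₂)
        + lyapunovMatrix 1 1 * x₁ ^ 2
      = -(x₁ ^ 2 + x₂ ^ 2) := by
  simp only [lyapunovMatrix, mulVec, vec2_dotProduct, of_apply, cons_val_zero, cons_val_one]
  ring

theorem dotProduct_lyapunovMatrix_mulVec_le (x₁ x₂ : ℝ) :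
    ![x₁, x₂] ⬝ᵥ lyapunovMatrix *ᵥ ![x₁, x₂] ≤ 7 / 2 * (x₁ ^ 2 + x₂ ^ 2) := by
  rw [lyapunovMatrix, dotProduct_mulVec_fin_two_of_symm]
  simp only [cons_val_zero, cons_val_one]
  nlinarith [sq_nonneg (x₁ - x₂ / 2)]

/-- For Example 1 of the paper there exists a symmetric positive definite matrix
`P` and `c₂ < 0` such that the generator of `V(x) = xᵀPx` satisfies
`𝓛V(x) = 2(Px)₁x₂ + 2(Px)₂(−2x₁−x₂) + P₂₂x₁² ≤ c₂ · xᵀPx` for all `x ∈ ℝ²`. -/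
theorem stmt_8 :
    ∃ (P : Matrix (Fin 2) (Fin 2) ℝ) (c₂ : ℝ), P.IsSymm ∧ P.PosDef ∧ c₂ < 0 ∧
      ∀ x₁ x₂ : ℝ,
        2 * (P.mulVec ![x₁, x₂] 0) * x₂
            + 2 * (P.mulVec ![x₁, x₂] 1) * (-2 * x₁ - x₂)
            + P 1 1 * x₁ ^ 2
          ≤ c₂ * (![x₁, x₂] ⬝ᵥ P.mulVec ![x₁, x₂]) := by
  refine ⟨lyapunovMatrix, -2 / 7, isSymm_of_fin_two _ _ _, posDef_of_fin_two (by norm_num)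
    (by norm_num), by norm_num, fun x₁ x₂ ↦ ?_⟩
  rw [generator_lyapunovMatrix]
  linarith [dotProduct_lyapunovMatrix_mulVec_le x₁ x₂]
end

section
/- Let 0 < b < a. (1) If a ≤ 1, then the function α ↦ (a^α − b^α)/α is monotone non-increasing on (0, 1]: for 0 < α₁ ≤ α₂ ≤ 1 one has (a^{α₂} − b^{α₂})/α₂ ≤ (a^{α₁} − b^{α₁})/α₁. (2) If b ≥ 1, then the function α ↦ (a^α − b^α)/α is monotone non-decreasing on (0, 1]. -/
/-- Bernoulli-type tangent-line bound for `rpow`. -/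
lemma bern_aux (u v r : ℝ) (hu : 0 ≤ u) (hv : 0 < v) (hr : 1 ≤ r) :
    r * v ^ (r - 1) * (u - v) ≤ u ^ r - v ^ r := by
  have hs : (-1 : ℝ) ≤ u / v - 1 := by
    have : 0 ≤ u / v := div_nonneg hu hv.le
    linarith
  have hB := one_add_mul_self_le_rpow_one_add hs hr
  have h1v : 1 + (u / v - 1) = u / v := by ring
  rw [h1v] at hB
  have hvr : (0 : ℝ) < v ^ r := Real.rpow_pos_of_pos hv r
  have h2 : (1 + r * (u / v - 1)) * v ^ r ≤ (u / v) ^ r * v ^ r :=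
    mul_le_mul_of_nonneg_right hB hvr.le
  have hdiv : (u / v) ^ r * v ^ r = u ^ r := by
    rw [Real.div_rpow hu hv.le, div_mul_cancel₀]
    exact ne_of_gt hvr
  have hsplit : v ^ r = v * v ^ (r - 1) := by
    nth_rewrite 1 [show r = 1 + (r - 1) by ring]
    rw [Real.rpow_add hv, Real.rpow_one]
  have hmul : (u / v - 1) * v = u - v := by field_simp
  have h3 : r * (u / v - 1) * v ^ r = r * v ^ (r - 1) * (u - v) := by
    rw [hsplit, ← hmul]; ring
  rw [hdiv] at h2
  nlinarith [h2, h3]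

/-- Monotonicity in `α ∈ (0,1]` of the convergence-time bound
`T_ε ∝ (a^α − b^α)/α` from Theorem 5 of the paper, with `a = ‖x₀‖`, `b = ε`,
`0 < b < a`: it is non-increasing in `α` when `a ≤ 1` and non-decreasing in `α`
when `b ≥ 1`. -/
theorem stmt_13 (a b : ℝ) (hb : 0 < b) (hba : b < a) :
    ((a ≤ 1) → ∀ α₁ α₂ : ℝ, 0 < α₁ → α₁ ≤ α₂ → α₂ ≤ 1 →
        (a ^ α₂ - b ^ α₂) / α₂ ≤ (a ^ α₁ - b ^ α₁) / α₁)
      ∧ ((1 ≤ b) → ∀ α₁ α₂ : ℝ, 0 < α₁ → α₁ ≤ α₂ → α₂ ≤ 1 →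
        (a ^ α₁ - b ^ α₁) / α₁ ≤ (a ^ α₂ - b ^ α₂) / α₂) := by
  have ha : 0 < a := hb.trans hba
  constructor
  · intro ha1 α₁ α₂ h1 h12 h21
    have hα₂ : 0 < α₂ := h1.trans_le h12
    set r := α₂ / α₁ with hrdef
    have hr : 1 ≤ r := (one_le_div h1).mpr h12
    have hαr : α₁ * r = α₂ := by
      rw [hrdef, mul_comm]; exact div_mul_cancel₀ α₂ (ne_of_gt h1)
    have hea : a ^ α₂ = (a ^ α₁) ^ r := by
      rw [← hαr, Real.rpow_mul ha.le]
    have heb : b ^ α₂ = (b ^ α₁) ^ r := by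
      rw [← hαr, Real.rpow_mul hb.le]
    have hu : 0 < a ^ α₁ := Real.rpow_pos_of_pos ha α₁
    have hv : 0 < b ^ α₁ := Real.rpow_pos_of_pos hb α₁
    have hvu : b ^ α₁ < a ^ α₁ := Real.rpow_lt_rpow hb.le hba h1
    have hkey := bern_aux (b ^ α₁) (a ^ α₁) r hv.le hu hr
    have hu1 : a ^ α₁ ≤ 1 := Real.rpow_le_one ha.le ha1 h1.le
    have hu1' : (a ^ α₁) ^ (r - 1) ≤ 1 :=
      Real.rpow_le_one hu.le hu1 (by linarith)
    have hup : 0 < (a ^ α₁) ^ (r - 1) := Real.rpow_pos_of_pos hu _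
    have hfin : (a ^ α₁) ^ r - (b ^ α₁) ^ r ≤ r * (a ^ α₁ - b ^ α₁) := by
      nlinarith [mul_nonneg (mul_nonneg (by linarith : (0:ℝ) ≤ r)
        (by linarith : (0:ℝ) ≤ a ^ α₁ - b ^ α₁))
        (by linarith : (0:ℝ) ≤ 1 - (a ^ α₁) ^ (r - 1))]
    rw [hea, heb, div_le_div_iff₀ hα₂ h1, ← hαr]
    nlinarith [mul_le_mul_of_nonneg_right hfin h1.le]
  · intro hb1 α₁ α₂ h1 h12 h21
    have hα₂ : 0 < α₂ := h1.trans_le h12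
    set r := α₂ / α₁ with hrdef
    have hr : 1 ≤ r := (one_le_div h1).mpr h12
    have hαr : α₁ * r = α₂ := by
      rw [hrdef, mul_comm]; exact div_mul_cancel₀ α₂ (ne_of_gt h1)
    have hea : a ^ α₂ = (a ^ α₁) ^ r := by
      rw [← hαr, Real.rpow_mul ha.le]
    have heb : b ^ α₂ = (b ^ α₁) ^ r := by
      rw [← hαr, Real.rpow_mul hb.le]
    have hu : 0 < a ^ α₁ := Real.rpow_pos_of_pos ha α₁
    have hv : 0 < b ^ α₁ := Real.rpow_pos_of_pos hb α₁
    have hvu : b ^ α₁ < a ^ α₁ := Real.rpow_lt_rpow hb.le hba h1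
    have hkey := bern_aux (a ^ α₁) (b ^ α₁) r hu.le hv hr
    have hv1 : 1 ≤ b ^ α₁ := Real.one_le_rpow hb1 h1.le
    have hv1' : 1 ≤ (b ^ α₁) ^ (r - 1) :=
      Real.one_le_rpow hv1 (by linarith)
    have hfin : r * (a ^ α₁ - b ^ α₁) ≤ (a ^ α₁) ^ r - (b ^ α₁) ^ r := by
      nlinarith [mul_nonneg (mul_nonneg (by linarith : (0:ℝ) ≤ r)
        (by linarith : (0:ℝ) ≤ a ^ α₁ - b ^ α₁))
        (by linarith : (0:ℝ) ≤ (b ^ α₁) ^ (r - 1) - 1)]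
    rw [hea, heb, div_le_div_iff₀ h1 hα₂, ← hαr]
    nlinarith [mul_le_mul_of_nonneg_right hfin h1.le]
end
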